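/- For the partitioned ensemble with four equiprobable pure qubit states with Bloch vectors ±u_a, ±u_b, where u_a = (e₁+e₂)/√2 and u_b = (e₁−e₂)/√2, the maximal success probability over all compatible pairs of dichotomic POVMs (C,D), namely M = max{(1/4)Σ_z [tr(ρ_{z|a}C(z)) + tr(ρ_{z|b}D(z))] : (C,D) compatible}, equals (1/2)(1 + 1/√2). -/

import Mathlib

open Matrix Complex Finset
open scoped ComplexOrder

noncomputable section

def σ1 : Matrix (Fin 2) (Fin 2) ℂ := !![0, 1; 1, 0]
def σ2 : Matrix (Fin 2) (Fin 2) ℂ := !![0, -Complex.I; Complex.I, 0]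
def σ3 : Matrix (Fin 2) (Fin 2) ℂ := !![1, 0; 0, -1]

/-- `v·σ = v₁σ₁ + v₂σ₂ + v₃σ₃` -/
def dotσ (v : Fin 3 → ℝ) : Matrix (Fin 2) (Fin 2) ℂ :=
  (v 0 : ℂ) • σ1 + (v 1 : ℂ) • σ2 + (v 2 : ℂ) • σ3

/-- A POVM: positive semidefinite effects summing to the identity. -/
def IsPOVM {d : ℕ} {X : Type} [Fintype X] (A : X → Matrix (Fin d) (Fin d) ℂ) : Prop :=
  (∀ x, (A x).PosSemidef) ∧ ∑ x, A x = 1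

/-- Compatibility: existence of a joint POVM with the given margins. -/
def Compatible {d : ℕ} {X Y : Type} [Fintype X] [Fintype Y]
    (A : X → Matrix (Fin d) (Fin d) ℂ) (B : Y → Matrix (Fin d) (Fin d) ℂ) : Prop :=
  ∃ J : X × Y → Matrix (Fin d) (Fin d) ℂ, IsPOVM J ∧
    (∀ x, A x = ∑ y, J (x, y)) ∧ (∀ y, B y = ∑ x, J (x, y))

/-- The generalized incompatibility robustness. -/
def etaG {d : ℕ} {X Y : Type} [Fintype X] [Fintype Y]
    (A : X → Matrix (Fin d) (Fin d) ℂ) (B : Y → Matrix (Fin d) (Fin d) ℂ) : ℝ :=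
  sSup {η : ℝ | η ∈ Set.Icc 0 1 ∧ ∃ C D, IsPOVM C ∧ IsPOVM D ∧
    Compatible (fun x => (η : ℂ) • A x + ((1 - η : ℝ) : ℂ) • C x)
      (fun y => (η : ℂ) • B y + ((1 - η : ℝ) : ℂ) • D y)}

/-- The qubit operator `(I + z v·σ)/2`. -/
def st (v : Fin 3 → ℝ) (z : ℝ) : Matrix (Fin 2) (Fin 2) ℂ :=
  ((1 : ℂ) / 2) • ((1 : Matrix (Fin 2) (Fin 2) ℂ) + (z : ℂ) • dotσ v)

/-- `u_a = (e₁+e₂)/√2`. -/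
def ua : Fin 3 → ℝ := ![1 / Real.sqrt 2, 1 / Real.sqrt 2, 0]

/-- `u_b = (e₁−e₂)/√2`. -/
def ub : Fin 3 → ℝ := ![1 / Real.sqrt 2, -(1 / Real.sqrt 2), 0]

/-- The sign associated with a Boolean outcome (`true ↦ +1`, `false ↦ −1`). -/
def sgn (z : Bool) : ℝ := if z then 1 else -1

/-- Success probability of the discrimination task for the ensemble with Bloch vectors
`±u_a, ±u_b` and dichotomic measurements `C, D`. -/
def Psucc (C D : Bool → Matrix (Fin 2) (Fin 2) ℂ) : ℝ :=
  (1 / 4) * ∑ z : Bool, ((st ua (sgn z) * C z).trace.re + (st ub (sgn z) * D z).trace.re)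

/-!
The joint POVM `J` of a compatible pair turns the success probability into
`(1/4) ∑_{x,y} tr((ρ_{x|a} + ρ_{y|b}) J(x,y))`. Since `ρ_{x|a} + ρ_{y|b} = I + (x u_a + y u_b)·σ/2`
and `(r·σ)² = |r|² I`, its largest eigenvalue is `1 + |x u_a + y u_b|/2 = 1 + 1/√2`, which bounds
the sum by `(1/4)(1 + 1/√2) tr I`. Equality holds when `J(x,y)` is half the projector onto the
corresponding top eigenvector; these four projectors sum to `2 I` because the four vectors
`x u_a + y u_b` sum to zero.
-/

section TraceInequalities

variable {n : Type*} [Fintype n] [DecidableEq n]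

open scoped MatrixOrder Matrix.Norms.L2Operator in
theorem Matrix.PosSemidef.trace_mul_nonneg {𝕜 : Type*} [RCLike 𝕜] {A B : Matrix n n 𝕜}
    (hA : A.PosSemidef) (hB : B.PosSemidef) : 0 ≤ (A * B).trace := by
  obtain ⟨X, rfl⟩ := CStarAlgebra.nonneg_iff_eq_star_mul_self.mp hA.nonneg
  rw [star_eq_conjTranspose, Matrix.mul_assoc, trace_mul_comm]
  exact (hB.mul_mul_conjTranspose_same X).trace_nonneg

theorem Matrix.PosSemidef.re_trace_mul_le {A B : Matrix n n ℂ} {c : ℝ}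
    (hA : ((c : ℂ) • 1 - A).PosSemidef) (hB : B.PosSemidef) :
    (A * B).trace.re ≤ c * B.trace.re := by
  have h := (Complex.nonneg_iff.mp (hA.trace_mul_nonneg hB)).1
  rw [Matrix.sub_mul, trace_sub, Complex.sub_re, smul_mul_assoc, Matrix.one_mul, trace_smul,
    smul_eq_mul, Complex.re_ofReal_mul] at h
  linarith

end TraceInequalities

section POVM

variable {d : ℕ} {X Y P : Type} [Fintype X] [Fintype Y] [Fintype P]

theorem IsPOVM.sum_re_trace {E : P → Matrix (Fin d) (Fin d) ℂ} (hE : IsPOVM E) :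
    ∑ p, (E p).trace.re = d := by
  rw [← Complex.re_sum, ← trace_sum, hE.2, trace_one, Fintype.card_fin, Complex.natCast_re]

theorem IsPOVM.sum_re_trace_mul_le {E A : P → Matrix (Fin d) (Fin d) ℂ} {c : ℝ} (hE : IsPOVM E)
    (hA : ∀ p, ((c : ℂ) • 1 - A p).PosSemidef) :
    ∑ p, (A p * E p).trace.re ≤ c * d := by
  calc ∑ p, (A p * E p).trace.re ≤ ∑ p, c * (E p).trace.re :=
        Finset.sum_le_sum fun p _ => (hA p).re_trace_mul_le (hE.1 p)
    _ = c * d := by rw [← Finset.mul_sum, hE.sum_re_trace]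

theorem Compatible.isPOVM_left {C : X → Matrix (Fin d) (Fin d) ℂ}
    {D : Y → Matrix (Fin d) (Fin d) ℂ} (h : Compatible C D) : IsPOVM C := by
  obtain ⟨E, hE, hC, -⟩ := h
  refine ⟨fun x => hC x ▸ posSemidef_sum _ fun y _ => hE.1 (x, y), ?_⟩
  rw [← hE.2, Fintype.sum_prod_type]
  exact Finset.sum_congr rfl fun x _ => hC x

theorem Compatible.isPOVM_right {C : X → Matrix (Fin d) (Fin d) ℂ}
    {D : Y → Matrix (Fin d) (Fin d) ℂ} (h : Compatible C D) : IsPOVM D := by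
  obtain ⟨E, hE, -, hD⟩ := h
  refine ⟨fun y => hD y ▸ posSemidef_sum _ fun x _ => hE.1 (x, y), ?_⟩
  rw [← hE.2, Fintype.sum_prod_type_right]
  exact Finset.sum_congr rfl fun y _ => hD y

theorem compatible_marginals {E : X × Y → Matrix (Fin d) (Fin d) ℂ} (hE : IsPOVM E) :
    Compatible (fun x => ∑ y, E (x, y)) (fun y => ∑ x, E (x, y)) :=
  ⟨E, hE, fun _ => rfl, fun _ => rfl⟩

theorem sum_trace_mul_marginals (E : X × Y → Matrix (Fin d) (Fin d) ℂ)
    (A : X → Matrix (Fin d) (Fin d) ℂ) (B : Y → Matrix (Fin d) (Fin d) ℂ) :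
    ∑ x, (A x * ∑ y, E (x, y)).trace + ∑ y, (B y * ∑ x, E (x, y)).trace
      = ∑ p, ((A p.1 + B p.2) * E p).trace := by
  simp only [Matrix.mul_sum, trace_sum, Matrix.add_mul, trace_add, Finset.sum_add_distrib,
    Fintype.sum_prod_type]
  rw [Finset.sum_comm (f := fun y x => (B y * E (x, y)).trace)]

end POVM

theorem dotσ_add (r s : Fin 3 → ℝ) : dotσ (r + s) = dotσ r + dotσ s := by
  simp only [dotσ, Pi.add_apply, Complex.ofReal_add, add_smul]
  abel

def dotσAddHom : (Fin 3 → ℝ) →+ Matrix (Fin 2) (Fin 2) ℂ := AddMonoidHom.mk' dotσ dotσ_add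

theorem dotσ_zero : dotσ 0 = 0 :=
  map_zero dotσAddHom

theorem dotσ_neg (r : Fin 3 → ℝ) : dotσ (-r) = -dotσ r :=
  map_neg dotσAddHom r

theorem dotσ_sum {ι : Type*} (s : Finset ι) (r : ι → Fin 3 → ℝ) :
    dotσ (∑ i ∈ s, r i) = ∑ i ∈ s, dotσ (r i) :=
  map_sum dotσAddHom r s

theorem dotσ_smul (a : ℝ) (r : Fin 3 → ℝ) : dotσ (a • r) = (a : ℂ) • dotσ r := by
  simp only [dotσ, Pi.smul_apply, smul_eq_mul, Complex.ofReal_mul, mul_smul, smul_add]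

theorem isHermitian_dotσ (r : Fin 3 → ℝ) : (dotσ r).IsHermitian := by
  ext i j
  fin_cases i <;> fin_cases j <;> simp [dotσ, σ1, σ2, σ3]

theorem trace_dotσ (r : Fin 3 → ℝ) : (dotσ r).trace = 0 := by
  simp [dotσ, σ1, σ2, σ3, trace_fin_two]

theorem trace_dotσ_mul_dotσ (r s : Fin 3 → ℝ) :
    (dotσ r * dotσ s).trace = 2 * (r ⬝ᵥ s : ℝ) := by
  simp [dotσ, σ1, σ2, σ3, trace_fin_two, dotProduct, Fin.sum_univ_three]
  linear_combination (-2 * r 1 * s 1 : ℂ) * I_sq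

theorem dotσ_mul_self (r : Fin 3 → ℝ) : dotσ r * dotσ r = ((r ⬝ᵥ r : ℝ) : ℂ) • 1 := by
  ext i j
  fin_cases i <;> fin_cases j <;> simp [dotσ, σ1, σ2, σ3, dotProduct, Fin.sum_univ_three]
  · linear_combination -(r 1 : ℂ) ^ 2 * I_sq
  · ring
  · ring
  · linear_combination -(r 1 : ℂ) ^ 2 * I_sq

theorem posSemidef_smul_one_sub_dotσ {c : ℝ} (hc : 0 < c) {r : Fin 3 → ℝ}
    (hr : r ⬝ᵥ r = c ^ 2) : ((c : ℂ) • 1 - dotσ r).PosSemidef := by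
  set M := (c : ℂ) • (1 : Matrix (Fin 2) (Fin 2) ℂ) - dotσ r
  have hM : Mᴴ = M := by
    simp [M, conjTranspose_sub, (isHermitian_dotσ r).eq]
  -- `(r·σ)² = c² I` makes `M / 2c` idempotent, hence `M = (2c)⁻¹ Mᴴ M`.
  have hMM : M * M = ((2 * c : ℝ) : ℂ) • M := by
    simp only [M, sub_mul, mul_sub, Matrix.one_mul, Matrix.mul_one, smul_mul_assoc,
      mul_smul_comm, dotσ_mul_self, hr]
    push_cast
    module
  have hM_eq : M = (((2 * c)⁻¹ : ℝ) : ℂ) • (Mᴴ * M) := by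
    rw [hM, hMM, smul_smul, ← Complex.ofReal_mul, inv_mul_cancel₀ (by positivity),
      Complex.ofReal_one, one_smul]
  rw [hM_eq]
  exact (posSemidef_conjTranspose_mul_self M).smul (Complex.zero_le_real.mpr (by positivity))

theorem st_add_st (u v : Fin 3 → ℝ) (z w : ℝ) :
    st u z + st v w = 1 + dotσ ((1 / 2 : ℝ) • (z • u + w • v)) := by
  simp only [st, dotσ_smul, dotσ_add]
  push_cast
  module

def blochSum (x y : Bool) : Fin 3 → ℝ := sgn x • ua + sgn y • ub

theorem blochSum_dotProduct_self (x y : Bool) : blochSum x y ⬝ᵥ blochSum x y = 2 := by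
  have h : (Real.sqrt 2)⁻¹ ^ 2 = 1 / 2 := by rw [inv_pow, Real.sq_sqrt zero_le_two, one_div]
  cases x <;> cases y <;> simp [blochSum, sgn, ua, ub, dotProduct, Fin.sum_univ_three] <;>
    linear_combination 4 * h

theorem sum_blochSum : ∑ p : Bool × Bool, blochSum p.1 p.2 = 0 := by
  ext i
  simp [blochSum, sgn, Fintype.sum_prod_type]
  ring

theorem st_add_st_eq_blochSum (x y : Bool) :
    st ua (sgn x) + st ub (sgn y) = 1 + dotσ ((1 / 2 : ℝ) • blochSum x y) :=
  st_add_st ua ub (sgn x) (sgn y)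

theorem Psucc_marginals (E : Bool × Bool → Matrix (Fin 2) (Fin 2) ℂ) :
    Psucc (fun x => ∑ y, E (x, y)) (fun y => ∑ x, E (x, y))
      = 1 / 4 * ∑ p, ((st ua (sgn p.1) + st ub (sgn p.2)) * E p).trace.re := by
  rw [Psucc, Finset.sum_add_distrib, ← Complex.re_sum, ← Complex.re_sum, ← Complex.add_re,
    sum_trace_mul_marginals, Complex.re_sum]

theorem posSemidef_smul_one_sub_st_add_st (x y : Bool) :
    (((1 + 1 / Real.sqrt 2 : ℝ) : ℂ) • 1 - (st ua (sgn x) + st ub (sgn y))).PosSemidef := by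
  have hr : ((1 / 2 : ℝ) • blochSum x y) ⬝ᵥ ((1 / 2 : ℝ) • blochSum x y)
      = (1 / Real.sqrt 2) ^ 2 := by
    rw [smul_dotProduct, dotProduct_smul, blochSum_dotProduct_self, div_pow,
      Real.sq_sqrt zero_le_two]
    norm_num
  convert posSemidef_smul_one_sub_dotσ (by positivity) hr using 1
  rw [st_add_st_eq_blochSum]
  push_cast
  module

def optimalJoint (p : Bool × Bool) : Matrix (Fin 2) (Fin 2) ℂ :=
  (1 / 4 : ℂ) • (1 + dotσ ((1 / Real.sqrt 2 : ℝ) • blochSum p.1 p.2))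

theorem isPOVM_optimalJoint : IsPOVM optimalJoint := by
  constructor
  · intro p
    set r := (1 / Real.sqrt 2 : ℝ) • blochSum p.1 p.2
    have hr : (-r) ⬝ᵥ (-r) = 1 ^ 2 := by
      rw [neg_dotProduct_neg, smul_dotProduct, dotProduct_smul, blochSum_dotProduct_self,
        smul_eq_mul, smul_eq_mul, ← mul_assoc, ← sq, div_pow, Real.sq_sqrt zero_le_two]
      norm_num
    have h := (posSemidef_smul_one_sub_dotσ one_pos hr).smul (a := (1 / 4 : ℂ))
      (by norm_num [Complex.nonneg_iff])
    rwa [dotσ_neg, Complex.ofReal_one, one_smul, sub_neg_eq_add] at h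
  · simp only [optimalJoint, ← Finset.smul_sum, Finset.sum_add_distrib, ← dotσ_sum, sum_blochSum]
    rw [smul_zero, dotσ_zero, add_zero, Finset.sum_const, Finset.card_univ,
      ← Nat.cast_smul_eq_nsmul ℂ, smul_smul]
    norm_num

theorem re_trace_st_add_st_mul_optimalJoint (p : Bool × Bool) :
    ((st ua (sgn p.1) + st ub (sgn p.2)) * optimalJoint p).trace.re
      = (1 + 1 / Real.sqrt 2) / 2 := by
  rw [st_add_st_eq_blochSum, optimalJoint]
  simp only [mul_smul_comm, trace_smul, add_mul, mul_add, Matrix.one_mul, Matrix.mul_one,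
    trace_add, trace_one, trace_dotσ, trace_dotσ_mul_dotσ, dotProduct_smul, smul_dotProduct,
    blochSum_dotProduct_self]
  norm_num
  field_simp
  linear_combination 2 * Real.sq_sqrt zero_le_two

/-- for the partitioned ensemble with Bloch vectors `±u_a, ±u_b`, the maximal
success probability over all compatible pairs of dichotomic qubit POVMs equals
`(1/2)(1 + 1/√2)`. -/
theorem stmt_17 :
    IsGreatest
      {p : ℝ | ∃ C D : Bool → Matrix (Fin 2) (Fin 2) ℂ,
        IsPOVM C ∧ IsPOVM D ∧ Compatible C D ∧ p = Psucc C D}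
      ((1 / 2) * (1 + 1 / Real.sqrt 2)) := by
  constructor
  · have h := compatible_marginals isPOVM_optimalJoint
    refine ⟨_, _, h.isPOVM_left, h.isPOVM_right, h, ?_⟩
    simp only [Psucc_marginals, re_trace_st_add_st_mul_optimalJoint, Finset.sum_const,
      Finset.card_univ, Fintype.card_prod, Fintype.card_bool, nsmul_eq_mul]
    ring
  · rintro p ⟨C, D, -, -, ⟨E, hE, hC, hD⟩, rfl⟩
    obtain rfl : C = fun x => ∑ y, E (x, y) := funext hC
    obtain rfl : D = fun y => ∑ x, E (x, y) := funext hD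
    have h := hE.sum_re_trace_mul_le fun p => posSemidef_smul_one_sub_st_add_st p.1 p.2
    rw [Nat.cast_ofNat] at h
    rw [Psucc_marginals]
    linarith
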